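/- arXiv:1709.06123 — 4 statements merged into one kernel-verified Lean document; each statement's English description precedes it below -/
import Mathlib

section
/- For every real z < 0, the Mills-type ratio satisfies the lower bound φ(z)/Φ(z) > (√(z²+8) − 3z)/4, where φ and Φ are the PDF and CDF of the standard normal distribution. -/
open Real MeasureTheory

noncomputable def stdPhi (z : ℝ) : ℝ := (Real.sqrt (2 * Real.pi))⁻¹ * Real.exp (-z ^ 2 / 2)

noncomputable def stdCDF (z : ℝ) : ℝ := ∫ t in Set.Iic z, stdPhi t

/-!
The Mills ratio `m = φ / Φ` solves the Riccati equation `m' = -m (m + z)`. If a positive `b`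
satisfies the strict inequality `b' < -b (b + z)` on `(-∞, a]`, then `G = φ / b - Φ` has
`G' = φ (-(b' + b (b + z))) / b² > 0` there; if moreover `φ / b → 0` at `-∞`, then `G → 0`,
so `G > 0`, i.e. `b < φ / Φ`. For `b z = (√(z² + 8) - 3z) / 4` one finds
`8 √(z² + 8) (b' + b (b + z)) = -(√(z² + 8) (z² + 2) + z (z² + 6))`, which is negative
because the squares of the two terms differ by `32`.
-/

open Filter Topology Set

section IntegralIic

variable {E : Type*} [NormedAddCommGroup E] [NormedSpace ℝ E] {f : ℝ → E}

theorem integral_Iic_eq_add_intervalIntegral (hf : Integrable f) (a b : ℝ) :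
    ∫ t in Iic b, f t = (∫ t in Iic a, f t) + ∫ t in a..b, f t := by
  rw [← intervalIntegral.integral_Iic_sub_Iic hf.integrableOn hf.integrableOn, add_sub_cancel]

theorem hasDerivAt_integral_Iic [CompleteSpace E] (hf : Integrable f) {x : ℝ}
    (hx : ContinuousAt f x) :
    HasDerivAt (fun u => ∫ t in Iic u, f t) (f x) x := by
  have h := (intervalIntegral.integral_hasDerivAt_right (a := 0) hf.intervalIntegrable
    hf.aestronglyMeasurable.stronglyMeasurableAtFilter hx).const_add (∫ t in Iic 0, f t)
  exact h.congr_of_eventuallyEq (Eventually.of_forall (integral_Iic_eq_add_intervalIntegral hf 0))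

theorem tendsto_integral_Iic_atBot [CompleteSpace E] (hf : Integrable f) :
    Tendsto (fun u => ∫ t in Iic u, f t) atBot (𝓝 0) := by
  have h := (intervalIntegral_tendsto_integral_Iic 0 hf.integrableOn tendsto_id).const_sub
    (∫ t in Iic 0, f t)
  rw [sub_self] at h
  refine h.congr fun u => ?_
  rw [integral_Iic_eq_add_intervalIntegral hf 0 u, intervalIntegral.integral_symm]
  simp

end IntegralIic

theorem StrictMonoOn.lt_of_tendsto_atBot {α β : Type*} [LinearOrder α] [NoMinOrder α]
    [TopologicalSpace β] [Preorder β] [ClosedIicTopology β] {f : α → β} {a : α} {c : β}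
    (hf : StrictMonoOn f (Iic a)) (hlim : Tendsto f atBot (𝓝 c)) {z : α} (hz : z ≤ a) :
    c < f z := by
  have : Nonempty α := ⟨z⟩
  obtain ⟨w, hw⟩ := exists_lt z
  have hfw : c ≤ f w := le_of_tendsto hlim <| (eventually_le_atBot w).mono fun u hu =>
    hf.monotoneOn (hu.trans (hw.le.trans hz)) (hw.le.trans hz) hu
  exact hfw.trans_lt (hf (hw.le.trans hz) hz hw)

theorem integrable_stdPhi : Integrable stdPhi := by
  refine ((integrable_exp_neg_mul_sq (b := 1 / 2) one_half_pos).const_mul (√(2 * π))⁻¹).congr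
    (.of_forall fun z => ?_)
  simp only [stdPhi]; ring_nf

theorem continuous_stdPhi : Continuous stdPhi := by
  unfold stdPhi; fun_prop

theorem stdPhi_pos (z : ℝ) : 0 < stdPhi z := by
  unfold stdPhi; positivity

theorem hasDerivAt_stdPhi (z : ℝ) : HasDerivAt stdPhi (-z * stdPhi z) z := by
  have h : HasDerivAt (fun z : ℝ => -z ^ 2 / 2) (-z) z := by
    have := (hasDerivAt_pow 2 z).neg.div_const 2
    simp only [Pi.neg_def, Nat.cast_ofNat, pow_one, Nat.add_one_sub_one] at this
    exact this.congr_deriv (by ring)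
  exact (h.exp.const_mul (√(2 * π))⁻¹).congr_deriv (by rw [stdPhi]; ring)

theorem tendsto_stdPhi_atBot : Tendsto stdPhi atBot (𝓝 0) := by
  have hsq : Tendsto (fun z : ℝ => z ^ 2 / 2) atBot atTop := by
    simpa [Function.comp_def] using
      ((tendsto_pow_atTop two_ne_zero).comp tendsto_neg_atBot_atTop).atTop_div_const
        (by norm_num : (0 : ℝ) < 2)
  have h := (tendsto_exp_atBot.comp (tendsto_neg_atTop_atBot.comp hsq)).const_mul (√(2 * π))⁻¹
  rw [mul_zero] at h
  refine h.congr fun z => ?_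
  simp only [stdPhi, Function.comp_apply, neg_div]

theorem hasDerivAt_stdCDF (z : ℝ) : HasDerivAt stdCDF (stdPhi z) z :=
  hasDerivAt_integral_Iic integrable_stdPhi continuous_stdPhi.continuousAt

theorem tendsto_stdCDF_atBot : Tendsto stdCDF atBot (𝓝 0) :=
  tendsto_integral_Iic_atBot integrable_stdPhi

theorem stdCDF_pos (z : ℝ) : 0 < stdCDF z := by
  rw [stdCDF, setIntegral_pos_iff_support_of_nonneg_ae (.of_forall fun t => (stdPhi_pos t).le)
    integrable_stdPhi.integrableOn, Function.support_eq_univ fun t => (stdPhi_pos t).ne',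
    univ_inter, volume_Iic]
  exact ENNReal.zero_lt_top

theorem stdCDF_lt_stdPhi_div_of_riccati_lt {b b' : ℝ → ℝ} {a : ℝ}
    (hpos : ∀ z ≤ a, 0 < b z) (hderiv : ∀ z ≤ a, HasDerivAt b (b' z) z)
    (hriccati : ∀ z < a, b' z + b z * (b z + z) < 0)
    (hlim : Tendsto (fun z => stdPhi z / b z) atBot (𝓝 0)) {z : ℝ} (hz : z ≤ a) :
    stdCDF z < stdPhi z / b z := by
  set G := fun z => stdPhi z / b z - stdCDF z
  have hG : ∀ x ≤ a, HasDerivAt G (stdPhi x * -(b' x + b x * (b x + x)) / b x ^ 2) x := by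
    intro x hx
    have h := ((hasDerivAt_stdPhi x).div (hderiv x hx) (hpos x hx).ne').sub (hasDerivAt_stdCDF x)
    refine h.congr_deriv ?_
    field_simp [(hpos x hx).ne']
    ring
  have hmono : StrictMonoOn G (Iic a) := by
    refine strictMonoOn_of_hasDerivWithinAt_pos (convex_Iic a)
      (fun x hx => (hG x hx).continuousAt.continuousWithinAt)
      (fun x hx => (hG x (interior_subset hx : x ∈ Iic a)).hasDerivWithinAt) fun x hx => ?_
    rw [interior_Iic] at hx
    exact div_pos (mul_pos (stdPhi_pos x) (neg_pos.2 (hriccati x hx))) (pow_pos (hpos x hx.le) 2)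
  have hGlim : Tendsto G atBot (𝓝 0) := by simpa using hlim.sub tendsto_stdCDF_atBot
  exact sub_pos.1 (hmono.lt_of_tendsto_atBot hGlim hz)

theorem lt_stdPhi_div_stdCDF_of_riccati_lt {b b' : ℝ → ℝ} {a : ℝ}
    (hpos : ∀ z ≤ a, 0 < b z) (hderiv : ∀ z ≤ a, HasDerivAt b (b' z) z)
    (hriccati : ∀ z < a, b' z + b z * (b z + z) < 0)
    (hlim : Tendsto (fun z => stdPhi z / b z) atBot (𝓝 0)) {z : ℝ} (hz : z ≤ a) :
    b z < stdPhi z / stdCDF z := by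
  rw [lt_div_iff₀ (stdCDF_pos z), mul_comm, ← lt_div_iff₀ (hpos z hz)]
  exact stdCDF_lt_stdPhi_div_of_riccati_lt hpos hderiv hriccati hlim hz

noncomputable def millsLowerBound (z : ℝ) : ℝ := (√(z ^ 2 + 8) - 3 * z) / 4

theorem millsLowerBound_pos {z : ℝ} (hz : z ≤ 0) : 0 < millsLowerBound z := by
  have := Real.sqrt_pos.2 (show 0 < z ^ 2 + 8 by positivity)
  unfold millsLowerBound; linarith

theorem hasDerivAt_millsLowerBound (z : ℝ) :
    HasDerivAt millsLowerBound ((z / √(z ^ 2 + 8) - 3) / 4) z := by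
  have h := ((((hasDerivAt_pow 2 z).add_const 8).sqrt (by positivity)).sub
    ((hasDerivAt_id z).const_mul 3)).div_const 4
  refine h.congr_deriv ?_
  field_simp
  ring

theorem sqrt_sq_add_eight_mul_add_pos (z : ℝ) :
    0 < √(z ^ 2 + 8) * (z ^ 2 + 2) + z * (z ^ 2 + 6) := by
  have hs := Real.sq_sqrt (show 0 ≤ z ^ 2 + 8 by positivity)
  have h : |z * (z ^ 2 + 6)| < √(z ^ 2 + 8) * (z ^ 2 + 2) :=
    abs_lt_of_sq_lt_sq (by rw [mul_pow, mul_pow, hs]; nlinarith) (by positivity)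
  linarith [neg_abs_le (z * (z ^ 2 + 6))]

theorem millsLowerBound_riccati_lt (z : ℝ) :
    (z / √(z ^ 2 + 8) - 3) / 4 + millsLowerBound z * (millsLowerBound z + z) < 0 := by
  have hs := Real.sq_sqrt (show 0 ≤ z ^ 2 + 8 by positivity)
  have h : (z / √(z ^ 2 + 8) - 3) / 4 + millsLowerBound z * (millsLowerBound z + z)
      = -(√(z ^ 2 + 8) * (z ^ 2 + 2) + z * (z ^ 2 + 6)) / (8 * √(z ^ 2 + 8)) := by
    unfold millsLowerBound
    field_simp
    linear_combination (8 * √(z ^ 2 + 8) - 16 * z) * hs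
  rw [h]
  exact div_neg_of_neg_of_pos (neg_neg_of_pos (sqrt_sq_add_eight_mul_add_pos z)) (by positivity)

theorem tendsto_millsLowerBound_atBot : Tendsto millsLowerBound atBot atTop := by
  refine tendsto_atTop_mono (fun z => ?_)
    (tendsto_neg_atBot_atTop.const_mul_atTop (show (0 : ℝ) < 3 / 4 by norm_num))
  have := Real.sqrt_nonneg (z ^ 2 + 8)
  unfold millsLowerBound; linarith

theorem mills_lower_bound (z : ℝ) (hz : z < 0) :
    stdPhi z / stdCDF z > (Real.sqrt (z ^ 2 + 8) - 3 * z) / 4 :=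
  lt_stdPhi_div_stdCDF_of_riccati_lt (fun _ => millsLowerBound_pos)
    (fun x _ => hasDerivAt_millsLowerBound x) (fun x _ => millsLowerBound_riccati_lt x)
    (tendsto_stdPhi_atBot.div_atTop tendsto_millsLowerBound_atBot) hz.le
end

section
/- For all real z < −38, the quantity 2(√(z²+4) − z)/(√(z²+8) − 3z) − 1 is strictly less than 4.8 × 10⁻⁷. -/
theorem error_bound_small (z : ℝ) (hz : z < -38) :
    2 * (Real.sqrt (z ^ 2 + 4) - z) / (Real.sqrt (z ^ 2 + 8) - 3 * z) - 1 <
      4.8 * 10 ^ (-(7 : ℤ)) := by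
  set a := Real.sqrt (z ^ 2 + 4) with ha_def
  set b := Real.sqrt (z ^ 2 + 8) with hb_def
  have ha0 : 0 ≤ a := Real.sqrt_nonneg _
  have hb0 : 0 ≤ b := Real.sqrt_nonneg _
  have ha2 : a ^ 2 = z ^ 2 + 4 := Real.sq_sqrt (by positivity)
  have hb2 : b ^ 2 = z ^ 2 + 8 := Real.sq_sqrt (by positivity)
  have ha : 38 < a := by nlinarith
  have hb : 38 < b := by nlinarith
  have hd : 0 < b - 3 * z := by linarith
  have h1 : (76:ℝ) < a - z := by linarith
  have h2 : (76:ℝ) < b - z := by linarith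
  have h3 : (76:ℝ) < a + b := by linarith
  have h12 : (5776:ℝ) < (a - z) * (b - z) := by nlinarith
  have hD : (438976:ℝ) < (a - z) * (b - z) * (a + b) := by nlinarith
  have hDpos : (0:ℝ) < (a - z) * (b - z) * (a + b) := by linarith
  have key : (2 * a - b + z) * ((a - z) * (b - z) * (a + b)) = 32 := by
    linear_combination (2*(b-z)*(a+b) - 8) * ha2 + (8 - (a-z)*(a+b)) * hb2
  have hN : 2 * a - b + z < 32 / 438976 := by
    have heq : 2 * a - b + z = 32 / ((a - z) * (b - z) * (a + b)) := by
      field_simp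
      linarith [key]
    rw [heq]
    apply div_lt_div_of_pos_left (by norm_num) (by norm_num) hD
  have heps : (32:ℝ) / 438976 < 4.8 * 10 ^ (-(7:ℤ)) * (b - 3 * z) := by
    have h152 : (152:ℝ) < b - 3 * z := by linarith
    have : (4.8:ℝ) * 10 ^ (-(7:ℤ)) * 152 < 4.8 * 10 ^ (-(7:ℤ)) * (b - 3*z) := by
      apply mul_lt_mul_of_pos_left h152 (by norm_num)
    calc (32:ℝ)/438976 < 4.8 * 10 ^ (-(7:ℤ)) * 152 := by norm_num
      _ < _ := this
  rw [sub_lt_iff_lt_add, div_lt_iff₀ hd]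
  nlinarith [hN, heps]
end

section
/- The function B(z) = 2(√(z²+4) − z)/(√(z²+8) − 3z) is strictly monotone increasing on (−∞, −38). -/
/-!
With `s = √(z² + 4)` and `t = √(z² + 8)`, the quotient rule gives
`B' = 2 (z - s) (t² + s z - 3 t (z + s)) / (s t (t - 3 z)²)`.
Both factors of the numerator are negative: `z < s`, and since `s² - z² = 4`, multiplying the
second factor by `s - z > 0` yields `4 (2 s - z - 3 t)`; finally `(2 s - z)² < 9 t²` reduces to
`-s z < z² + 14`, which holds because `|s z| ≤ z² + 2`. So `B` increases on all of `(-∞, 1)`,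
where its denominator is positive.
-/

open Real Set

noncomputable def errorBound (z : ℝ) : ℝ := 2 * (√(z ^ 2 + 4) - z) / (√(z ^ 2 + 8) - 3 * z)

lemma hasDerivAt_sqrt_sq_add {c : ℝ} (hc : 0 < c) (z : ℝ) :
    HasDerivAt (fun z : ℝ => √(z ^ 2 + c)) (z / √(z ^ 2 + c)) z := by
  refine (((hasDerivAt_pow 2 z).add_const c).sqrt (by positivity)).congr_deriv ?_
  field_simp
  ring

lemma sqrt_sq_add_eight_sub_pos {z : ℝ} (hz : z < 1) : 0 < √(z ^ 2 + 8) - 3 * z := by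
  have ht : √(z ^ 2 + 8) ^ 2 = z ^ 2 + 8 := sq_sqrt (by positivity)
  nlinarith [sqrt_nonneg (z ^ 2 + 8)]

lemma hasDerivAt_errorBound {z : ℝ} (hz : z < 1) :
    HasDerivAt errorBound
      (2 * (z - √(z ^ 2 + 4)) * (√(z ^ 2 + 8) ^ 2 + √(z ^ 2 + 4) * z
          - 3 * √(z ^ 2 + 8) * (z + √(z ^ 2 + 4)))
        / (√(z ^ 2 + 4) * √(z ^ 2 + 8) * (√(z ^ 2 + 8) - 3 * z) ^ 2)) z := by
  have hs : 0 < √(z ^ 2 + 4) := sqrt_pos.mpr (by positivity)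
  have ht : 0 < √(z ^ 2 + 8) := sqrt_pos.mpr (by positivity)
  have hden := sqrt_sq_add_eight_sub_pos hz
  have hnum : HasDerivAt (fun z : ℝ => 2 * (√(z ^ 2 + 4) - z)) (2 * (z / √(z ^ 2 + 4) - 1)) z :=
    ((hasDerivAt_sqrt_sq_add four_pos z).sub (hasDerivAt_id z)).const_mul 2
  have hdenom : HasDerivAt (fun z : ℝ => √(z ^ 2 + 8) - 3 * z) (z / √(z ^ 2 + 8) - 3) z := by
    simpa using (hasDerivAt_sqrt_sq_add (by norm_num) z).fun_sub ((hasDerivAt_id z).const_mul 3)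
  refine (hnum.fun_div hdenom hden.ne').congr_deriv ?_
  field_simp
  ring

lemma sq_add_mul_lt_three_mul_mul_add {s t z : ℝ} (hs : s ^ 2 = z ^ 2 + 4)
    (ht : t ^ 2 = z ^ 2 + 8) (hs0 : 0 ≤ s) (ht0 : 0 ≤ t) :
    t ^ 2 + s * z < 3 * t * (z + s) := by
  have hsz : -(s * z) < z ^ 2 + 14 := by nlinarith [sq_nonneg (s + z)]
  have hlt : 2 * s - z < 3 * t := by nlinarith
  have hmul : (t ^ 2 + s * z - 3 * t * (z + s)) * (s - z) = 4 * (2 * s - z - 3 * t) := by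
    linear_combination (s - z) * ht + z * hs - 3 * t * hs
  have hpos : 0 < s - z := by nlinarith
  nlinarith

theorem errorBound_strictMonoOn : StrictMonoOn errorBound (Iio 1) := by
  apply strictMonoOn_of_deriv_pos (convex_Iio _)
  · exact fun z hz => (hasDerivAt_errorBound hz).continuousAt.continuousWithinAt
  · intro z hz
    rw [interior_Iio] at hz
    rw [(hasDerivAt_errorBound hz).deriv]
    have hs : 0 < √(z ^ 2 + 4) := sqrt_pos.mpr (by positivity)
    have ht : 0 < √(z ^ 2 + 8) := sqrt_pos.mpr (by positivity)
    have hzs : z < √(z ^ 2 + 4) := lt_sqrt_of_sq_lt (by linarith)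
    have hfactor := sq_add_mul_lt_three_mul_mul_add (sq_sqrt (by positivity))
      (sq_sqrt (by positivity)) hs.le ht.le
    refine div_pos (mul_pos_of_neg_of_neg (by linarith) (by linarith)) ?_
    exact mul_pos (mul_pos hs ht) (pow_pos (sqrt_sq_add_eight_sub_pos hz) 2)

theorem error_bound_strict_mono :
    StrictMonoOn
      (fun z : ℝ => 2 * (Real.sqrt (z ^ 2 + 4) - z) / (Real.sqrt (z ^ 2 + 8) - 3 * z))
      (Set.Iio (-38 : ℝ)) :=
  errorBound_strictMonoOn.mono (Iio_subset_Iio (by norm_num))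
end

section
/- Let f : ℝᵐ → (0, ∞) be continuous and integrable on boxes, and for ξ₁ < ξ₂ define s(ξ₁,ξ₂) = ∫_{[ξ₁,ξ₂]ᵐ} f(h) dh. Then ∂(ln s)/∂ξ₂ = Σ_{j=1}^{m} pⱼ(ξ₂), where pⱼ(ξ₂) is the value at hⱼ = ξ₂ of the j-th marginal density of the probability distribution with density f/s on the box [ξ₁,ξ₂]ᵐ, i.e., pⱼ(ξ₂) = ∫_{[ξ₁,ξ₂]^{m−1}} f(h₁,…,h_{j−1}, ξ₂, h_{j+1},…,h_m) dh_{−j} / s. -/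
/-!
Write `Φ(b) = ∫_{[a, b]} f` for a box with upper corner `b ∈ ℝᵐ`. Raising the corner from `b` to
`b'` one coordinate at a time and applying Fubini in that coordinate gives
`Φ(b') - Φ(b) = ∑ⱼ ∫_{bⱼ}^{b'ⱼ} Sⱼ(u) du`, where `Sⱼ(u)` integrates `f` over the slice `{xⱼ = u}`
of the `j`-th intermediate box. For `b = (ξ₂, …, ξ₂)` and `b' = (t, …, t)` the slice integral
`Sⱼ(t, u)` is jointly continuous (dominated convergence: box boundaries are null), hence
`d/dt ∫_{ξ₂}^{t} Sⱼ(t, u) du = Sⱼ(ξ₂, ξ₂)` at `t = ξ₂`, the numerator of the `j`-th marginal.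
Dividing by `s > 0` gives the derivative of `log s`.
-/

open Real MeasureTheory

/-- Normalizer of the restriction of f to the box [ξ₁, ξ₂]ᵐ. -/
noncomputable def boxNormalizer {m : ℕ} (f : (Fin m → ℝ) → ℝ) (ξ₁ ξ₂ : ℝ) : ℝ :=
  ∫ h in Set.univ.pi fun _ : Fin m => Set.Icc ξ₁ ξ₂, f h

/-- The j-th marginal density of f/s on the box [ξ₁, ξ₂]ᵐ, evaluated at the
upper endpoint hⱼ = ξ₂: integrate f over the remaining m−1 coordinates and
divide by the normalizer. -/
noncomputable def marginalAtUpper {m : ℕ} (f : (Fin m → ℝ) → ℝ) (ξ₁ ξ₂ : ℝ)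
    (j : Fin m) : ℝ :=
  (∫ g : { i : Fin m // i ≠ j } → ℝ in
      Set.univ.pi fun _ : { i : Fin m // i ≠ j } => Set.Icc ξ₁ ξ₂,
      f (fun i => if hij : i = j then ξ₂ else g ⟨i, hij⟩)) /
    boxNormalizer f ξ₁ ξ₂

open Set Filter Topology

section InsertCoord

variable {ι α : Type*} [DecidableEq ι]

def insertCoord (j : ι) (u : α) (g : {i // i ≠ j} → α) : ι → α :=
  fun i => if h : i = j then u else g ⟨i, h⟩

theorem insertCoord_mem_pi_iff {j : ι} {u : α} {g : {i // i ≠ j} → α} {s : ι → Set α} :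
    insertCoord j u g ∈ univ.pi s ↔ u ∈ s j ∧ g ∈ univ.pi fun i : {i // i ≠ j} => s i := by
  simp only [mem_univ_pi]
  refine ⟨fun h => ⟨by simpa [insertCoord] using h j,
    fun i => by simpa [insertCoord, i.2] using h i⟩, fun ⟨hu, hg⟩ i => ?_⟩
  by_cases hi : i = j
  · subst hi; simpa [insertCoord] using hu
  · simpa [insertCoord, hi] using hg ⟨i, hi⟩

theorem insertCoord_mem_Icc_iff [Preorder α] {j : ι} {u : α} {g : {i // i ≠ j} → α}
    {a b : ι → α} :
    insertCoord j u g ∈ Icc a b ↔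
      u ∈ Icc (a j) (b j) ∧ g ∈ Icc (fun i : {i // i ≠ j} => a i) (fun i => b i) := by
  simp only [← pi_univ_Icc, insertCoord_mem_pi_iff]

theorem continuous_insertCoord [TopologicalSpace α] (j : ι) :
    Continuous fun p : α × ({i // i ≠ j} → α) => insertCoord j p.1 p.2 :=
  continuous_pi fun i => by
    by_cases hi : i = j
    · simpa only [insertCoord, dif_pos hi] using continuous_fst
    · simp only [insertCoord, dif_neg hi]
      exact (continuous_apply _).comp continuous_snd

def MeasurableEquiv.insertCoord [MeasurableSpace α] (j : ι) :
    α × ({i // i ≠ j} → α) ≃ᵐ (ι → α) :=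
  ((MeasurableEquiv.funUnique {i // i = j} α).symm.prodCongr (.refl _)).trans
    (MeasurableEquiv.piEquivPiSubtypeProd (fun _ => α) (· = j)).symm

theorem volume_preserving_insertCoord [Fintype ι] [MeasureSpace α]
    [SigmaFinite (volume : Measure α)] (j : ι) :
    MeasurePreserving (MeasurableEquiv.insertCoord (α := α) j) := by
  refine MeasurePreserving.trans ?_ (volume_preserving_piEquivPiSubtypeProd (fun _ => α) _).symm
  rw [Measure.volume_eq_prod, Measure.volume_eq_prod]
  convert (volume_preserving_funUnique {i // i = j} α).symm.prod (MeasurePreserving.id volume)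
  · rfl
  · infer_instance

end InsertCoord

section Boxes

variable {ι E : Type*} [Fintype ι] [NormedAddCommGroup E] [NormedSpace ℝ E]

theorem eventually_mem_Icc_iff_of_ne {a b₀ g : ι → ℝ} (hg : ∀ i, g i ≠ b₀ i) :
    ∀ᶠ b in 𝓝 b₀, (g ∈ Icc a b ↔ g ∈ Icc a b₀) := by
  have hcoord : ∀ᶠ b in 𝓝 b₀, ∀ i, (g i ≤ b i ↔ g i ≤ b₀ i) := eventually_all.2 fun i => by
    rcases (hg i).lt_or_gt with h | h
    · filter_upwards [(continuous_apply i).continuousAt.eventually (lt_mem_nhds h)] with b hb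
      exact iff_of_true hb.le h.le
    · filter_upwards [(continuous_apply i).continuousAt.eventually (gt_mem_nhds h)] with b hb
      exact iff_of_false hb.not_ge h.not_ge
  filter_upwards [hcoord] with b hb
  simp only [mem_Icc, Pi.le_def, hb]

/-- Dominated convergence: the boundary of `Icc a b₀` lies in finitely many hyperplanes
`{g | g i = b₀ i}`, off which the indicator of `Icc a b` is locally constant in `b`. -/
theorem continuous_setIntegral_Icc {X : Type*} [TopologicalSpace X] [FirstCountableTopology X]
    [WeaklyLocallyCompactSpace X] {F : X → (ι → ℝ) → E}
    (hF : Continuous (Function.uncurry F)) (a : ι → ℝ) :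
    Continuous fun p : X × (ι → ℝ) => ∫ g in Icc a p.2, F p.1 g := by
  refine continuous_iff_continuousAt.2 fun ⟨x₀, b₀⟩ => ?_
  obtain ⟨K, hKc, hK⟩ := exists_compact_mem_nhds x₀
  set B := Icc a (b₀ + 1)
  obtain ⟨M, hM⟩ := (hKc.prod isCompact_Icc : IsCompact (K ×ˢ B)).exists_bound_of_continuousOn
    hF.continuousOn
  have hnear : K ×ˢ Iic (b₀ + 1) ∈ 𝓝 (x₀, b₀) :=
    prod_mem_nhds hK (pi_Iic_mem_nhds fun i => lt_add_one _)
  have hB : ∀ᶠ p : X × (ι → ℝ) in 𝓝 (x₀, b₀),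
      ∫ g in B, (Icc a p.2).indicator (F p.1) g = ∫ g in Icc a p.2, F p.1 g :=
    eventually_of_mem hnear fun p hp => by
      rw [setIntegral_indicator measurableSet_Icc, inter_eq_right.2 (Icc_subset_Icc_right hp.2)]
  refine ContinuousAt.congr ?_ hB
  have hgen : ∀ᵐ g : ι → ℝ, ∀ i, g i ≠ b₀ i := ae_all_iff.2 fun i =>
    (measure_eq_zero_iff_ae_notMem (s := {g : ι → ℝ | g i = b₀ i})).1
      (Measure.pi_hyperplane _ i _)
  apply continuousAt_of_dominated (bound := fun _ => M)
  · exact .of_forall fun p =>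
      (hF.comp (Continuous.prodMk_right p.1)).aestronglyMeasurable.indicator measurableSet_Icc
  · refine eventually_of_mem hnear fun p hp =>
      (ae_restrict_mem measurableSet_Icc).mono fun g hg => ?_
    exact (norm_indicator_le_norm_self _ _).trans (hM (p.1, g) ⟨hp.1, hg⟩)
  · exact integrableOn_const isCompact_Icc.measure_lt_top.ne
  · refine ae_restrict_of_ae (hgen.mono fun g hg => ?_)
    have hloc := (continuous_snd.tendsto (x₀, b₀)).eventually
      (eventually_mem_Icc_iff_of_ne (a := a) hg)
    by_cases hg₀ : g ∈ Icc a b₀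
    · exact (hF.comp (continuous_fst.prodMk continuous_const)).continuousAt.congr
        (hloc.mono fun p hp => (indicator_of_mem (hp.2 hg₀) _).symm)
    · exact continuousAt_const.congr
        (hloc.mono fun p hp => (indicator_of_notMem (mt hp.1 hg₀) _).symm)

theorem setIntegral_Icc_pos {f : (ι → ℝ) → ℝ} (hf : Continuous f) (hpos : ∀ x, 0 < f x)
    {a b : ι → ℝ} (hab : ∀ i, a i < b i) : 0 < ∫ x in Icc a b, f x := by
  rw [setIntegral_pos_iff_support_of_nonneg_ae (.of_forall fun x => (hpos x).le)
    (hf.continuousOn.integrableOn_compact isCompact_Icc),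
    Function.support_eq_univ fun x => (hpos x).ne', univ_inter, Real.volume_Icc_pi]
  exact pos_iff_ne_zero.2
    (Finset.prod_ne_zero_iff.2 fun i _ => (ENNReal.ofReal_pos.2 (sub_pos.2 (hab i))).ne')

variable [DecidableEq ι]

noncomputable def sliceIntegral (f : (ι → ℝ) → E) (j : ι) (a b : {i // i ≠ j} → ℝ) (u : ℝ) :
    E :=
  ∫ g in Icc a b, f (insertCoord j u g)

theorem setIntegral_Icc_eq_integral_sliceIntegral (j : ι) {f : (ι → ℝ) → E} {a b : ι → ℝ}
    (hf : IntegrableOn f (Icc a b)) :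
    ∫ x in Icc a b, f x =
      ∫ u in Icc (a j) (b j), sliceIntegral f j (fun i => a i) (fun i => b i) u := by
  have he := volume_preserving_insertCoord (α := ℝ) j
  have hemb := (MeasurableEquiv.insertCoord (α := ℝ) j).measurableEmbedding
  have hpre : MeasurableEquiv.insertCoord j ⁻¹' Icc a b =
      Icc (a j) (b j) ×ˢ Icc (fun i : {i // i ≠ j} => a i) (fun i => b i) := by
    ext; exact insertCoord_mem_Icc_iff (a := a)
  rw [← he.setIntegral_preimage_emb hemb, hpre, Measure.volume_eq_prod, setIntegral_prod]
  · rfl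
  · rw [← hpre, ← Measure.volume_eq_prod]
    exact (he.integrableOn_comp_preimage hemb).2 hf

theorem continuous_sliceIntegral {f : (ι → ℝ) → E} (hf : Continuous f) (j : ι)
    (a : {i // i ≠ j} → ℝ) :
    Continuous fun p : ({i // i ≠ j} → ℝ) × ℝ => sliceIntegral f j a p.1 p.2 :=
  (continuous_setIntegral_Icc (F := fun u g => f (insertCoord j u g))
    (hf.comp (continuous_insertCoord j)) a).comp continuous_swap

theorem setIntegral_Icc_sub_eq_sum {m : ℕ} {f : (Fin m → ℝ) → E} (hf : Continuous f)
    {a b b' : Fin m → ℝ} (hb : a ≤ b) (hb' : a ≤ b') :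
    (∫ x in Icc a b', f x) - ∫ x in Icc a b, f x =
      ∑ j, ∫ u in b j..b' j,
        sliceIntegral f j (fun i => a i) (fun i => if i.1 < j then b' i else b i) u := by
  set corner : ℕ → Fin m → ℝ := fun n i => if (i : ℕ) < n then b' i else b i
  set q : ℕ → E := fun n => ∫ x in Icc a (corner n), f x
  have hstep : ∀ j : Fin m, q (j + 1) - q j = ∫ u in b j..b' j,
      sliceIntegral f j (fun i => a i) (fun i => if i.1 < j then b' i else b i) u := by
    intro j
    have hslice :
        (fun i : {i // i ≠ j} => corner (j + 1) i) = fun i : {i // i ≠ j} => corner j i := by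
      ext i
      simp only [corner, Nat.lt_succ_iff_lt_or_eq, Fin.val_eq_val, i.2, or_false]
    have hS : Continuous (sliceIntegral f j (fun i => a i) fun i : {i // i ≠ j} => corner j i) :=
      (continuous_sliceIntegral hf j _).comp (continuous_const.prodMk continuous_id)
    have hfq : ∀ n, IntegrableOn f (Icc a (corner n)) :=
      fun n => hf.continuousOn.integrableOn_compact isCompact_Icc
    simp only [q]
    rw [setIntegral_Icc_eq_integral_sliceIntegral j (hfq _),
      setIntegral_Icc_eq_integral_sliceIntegral j (hfq _), hslice]
    simp only [corner, lt_add_one, lt_irrefl, if_true, if_false]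
    rw [integral_Icc_eq_integral_Ioc, integral_Icc_eq_integral_Ioc,
      ← intervalIntegral.integral_of_le (hb' j), ← intervalIntegral.integral_of_le (hb j),
      intervalIntegral.integral_interval_sub_left (hS.intervalIntegrable _ _)
        (hS.intervalIntegrable _ _)]
    rfl
  have hq0 : q 0 = ∫ x in Icc a b, f x := by simp [q, corner]
  have hqm : q m = ∫ x in Icc a b', f x := by simp [q, corner]
  calc (∫ x in Icc a b', f x) - ∫ x in Icc a b, f x = q m - q 0 := by rw [hq0, hqm]
    _ = ∑ j : Fin m, (q (j + 1) - q j) := by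
      rw [Fin.sum_univ_eq_sum_range (fun k => q (k + 1) - q k), Finset.sum_range_sub]
    _ = _ := Finset.sum_congr rfl fun j _ => hstep j

end Boxes

theorem hasDerivAt_intervalIntegral_diag {E : Type*} [NormedAddCommGroup E] [NormedSpace ℝ E]
    [CompleteSpace E] {G : ℝ → ℝ → E} {x₀ : ℝ} (hG : ContinuousAt (Function.uncurry G) (x₀, x₀))
    (hint : ∀ᶠ t in 𝓝 x₀, IntervalIntegrable (G t) volume x₀ t) :
    HasDerivAt (fun t => ∫ u in x₀..t, G t u) (G x₀ x₀) x₀ := by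
  rw [hasDerivAt_iff_isLittleO, Asymptotics.isLittleO_iff]
  intro ε hε
  obtain ⟨δ, hδ, hclose⟩ := Metric.continuousAt_iff.1 hG ε hε
  filter_upwards [hint, Metric.ball_mem_nhds x₀ hδ] with t ht htδ
  have hsub : (∫ u in x₀..t, G t u) - (∫ u in x₀..x₀, G x₀ u) - (t - x₀) • G x₀ x₀ =
      ∫ u in x₀..t, (G t u - G x₀ x₀) := by
    rw [intervalIntegral.integral_sub ht intervalIntegrable_const, intervalIntegral.integral_const,
      intervalIntegral.integral_same, sub_zero]
  rw [hsub, Real.norm_eq_abs (t - x₀)]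
  refine intervalIntegral.norm_integral_le_of_norm_le_const fun u hu => ?_
  have hu : dist u x₀ ≤ dist t x₀ := by
    simpa only [Real.dist_eq] using abs_sub_left_of_mem_uIcc (uIoc_subset_uIcc hu)
  rw [← dist_eq_norm]
  have hpair : dist (t, u) (x₀, x₀) < δ := by
    rw [Prod.dist_eq]; exact max_lt htδ (hu.trans_lt htδ)
  exact (hclose hpair).le

theorem hasDerivAt_setIntegral_Icc_const {E : Type*} [NormedAddCommGroup E] [NormedSpace ℝ E]
    [CompleteSpace E] {m : ℕ} {f : (Fin m → ℝ) → E} (hf : Continuous f) {a b : ℝ} (hab : a < b) :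
    HasDerivAt (fun t => ∫ x in Icc (fun _ => a) (fun _ => t), f x)
      (∑ j, sliceIntegral f j (fun _ => a) (fun _ => b) b) b := by
  set G : Fin m → ℝ → ℝ → E := fun j t u =>
    sliceIntegral f j (fun _ => a) (fun i => if i.1 < j then t else b) u
  have hG : ∀ j, Continuous (Function.uncurry (G j)) := fun j =>
    (continuous_sliceIntegral hf j _).comp
      (((continuous_pi fun i => continuous_if_const _ (fun _ => continuous_id)
        fun _ => continuous_const).comp continuous_fst).prodMk continuous_snd)
  have hderiv : HasDerivAt (fun t => (∫ x in Icc (fun _ => a) (fun _ => b), f x) +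
      ∑ j, ∫ u in b..t, G j t u) (∑ j, G j b b) b :=
    (HasDerivAt.fun_sum fun j _ => hasDerivAt_intervalIntegral_diag (hG j).continuousAt
      (.of_forall fun t => ((hG j).comp (Continuous.prodMk_right t)).intervalIntegrable _ _)
      ).const_add _
  simp only [G, ite_self] at hderiv
  refine hderiv.congr_of_eventuallyEq ?_
  filter_upwards [lt_mem_nhds hab] with t ht
  rw [← setIntegral_Icc_sub_eq_sum hf (fun _ => hab.le) (fun _ => ht.le), add_sub_cancel]

theorem log_box_normalizer_upper_gradient_general {m : ℕ}
    (f : (Fin m → ℝ) → ℝ) (hf : Continuous f) (hpos : ∀ h, 0 < f h)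
    (ξ₁ ξ₂ : ℝ) (hξ : ξ₁ < ξ₂) :
    HasDerivAt (fun t => Real.log (boxNormalizer f ξ₁ t))
      (∑ j, marginalAtUpper f ξ₁ ξ₂ j) ξ₂ := by
  have hbox : ∀ t, boxNormalizer f ξ₁ t = ∫ x in Icc (fun _ => ξ₁) (fun _ => t), f x :=
    fun t => by rw [boxNormalizer, pi_univ_Icc]
  have hmarg : ∀ j, marginalAtUpper f ξ₁ ξ₂ j =
      sliceIntegral f j (fun _ => ξ₁) (fun _ => ξ₂) ξ₂ / boxNormalizer f ξ₁ ξ₂ := fun j => by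
    rw [marginalAtUpper, sliceIntegral, pi_univ_Icc]; rfl
  simp only [hmarg, ← Finset.sum_div, hbox]
  exact (hasDerivAt_setIntegral_Icc_const hf hξ).log
    (setIntegral_Icc_pos hf hpos fun _ => hξ).ne'

/-- Leibniz rule for the log normalizer over a cube with a common upper
truncation point: the derivative is the sum of the marginal densities at the
upper endpoint. -/
theorem log_box_normalizer_upper_gradient {m : ℕ}
    (f : (Fin m → ℝ) → ℝ) (hf : Continuous f) (hpos : ∀ h, 0 < f h)
    (hint : ∀ a b : ℝ, IntegrableOn f (Set.univ.pi fun _ : Fin m => Set.Icc a b) volume)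
    (ξ₁ ξ₂ : ℝ) (hξ : ξ₁ < ξ₂) :
    HasDerivAt (fun t => Real.log (boxNormalizer f ξ₁ t))
      (∑ j, marginalAtUpper f ξ₁ ξ₂ j) ξ₂ :=
  log_box_normalizer_upper_gradient_general f hf hpos ξ₁ ξ₂ hξ
end
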